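/- Let G be a finite group, p a prime, x a p-element of G contained in a Sylow p-subgroup P, and H ≤ G a subgroup containing N_G(P). Suppose that for all g ∈ G, x ∈ Hᵍ implies Hᵍ = H. Then Sub_G(x) ≤ H. If moreover ⟨x⟩ is subnormal in H, then Sub_G(x) = H. -/

import Mathlib

variable {G : Type*} [Group G]

/-- `A` is subnormal in `B`: there is a chain `A = s 0 ⊴ s 1 ⊴ ⋯ ⊴ s n = B`. -/
def IsSubnormalIn (A B : Subgroup G) : Prop :=
  ∃ (n : ℕ) (s : ℕ → Subgroup G), s 0 = A ∧ s n = B ∧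
    ∀ i < n, s i ≤ s (i + 1) ∧ ∀ g ∈ s (i + 1), ∀ a ∈ s i, g * a * g⁻¹ ∈ s i

/-- The subnormaliser `Sub_G(x)` of an element `x`. -/
def subnormalizer (x : G) : Subgroup G :=
  Subgroup.closure
    {g : G | IsSubnormalIn (Subgroup.zpowers x) (Subgroup.closure {g, x})}

/-!
Let `K = ⟨g, x⟩` with `⟨x⟩` subnormal in `K`. The normal closure in `K` of a subnormal
`p`-subgroup is again a `p`-group, so it lies in some Sylow subgroup `Pᵃ ≤ Hᵃ`; since it contains
`x`, the hypothesis forces `Hᵃ = H`. Thus every `K`-conjugate of `x` lies in `H`, i.e. `x ∈ Hᶜ`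
for all `c ∈ K`, so `K` normalizes `H`. By the Frattini argument `H ⊇ N_G(P)` is self-normalizing,
hence `g ∈ K ≤ H`. Conversely, if `⟨x⟩` is subnormal in `H`, it is subnormal in every `⟨h, x⟩ ≤ H`.
-/

open Subgroup

namespace Subgroup

def normalClosureIn (A B : Subgroup G) : Subgroup G :=
  ⨆ b : B, A.map (MulAut.conj (b : G)).toMonoidHom

variable {A A' B C : Subgroup G}

theorem map_conj_le_normalClosureIn {b : G} (hb : b ∈ B) :
    A.map (MulAut.conj b).toMonoidHom ≤ normalClosureIn A B :=
  le_iSup (fun c : B => A.map (MulAut.conj (c : G)).toMonoidHom) ⟨b, hb⟩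

theorem le_normalClosureIn : A ≤ normalClosureIn A B := fun a ha =>
  map_conj_le_normalClosureIn B.one_mem ⟨a, ha, by simp⟩

theorem normalClosureIn_mono (h : A ≤ A') : normalClosureIn A B ≤ normalClosureIn A' B :=
  iSup_mono fun _ => map_mono h

theorem normalClosureIn_le (hA : A ≤ C) (hB : B ≤ normalizer C) : normalClosureIn A B ≤ C :=
  iSup_le fun b => (map_mono hA).trans
    (mem_normalizer_iff_map_conj_eq.mp (hB b.2)).le

theorem le_normalizer_normalClosureIn : B ≤ normalizer (normalClosureIn A B) := by
  refine le_normalizer_iff.mpr fun b hb k hk => ?_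
  have : (normalClosureIn A B).map (MulAut.conj b).toMonoidHom ≤ normalClosureIn A B := by
    rw [normalClosureIn, map_iSup]
    refine iSup_le fun c => ?_
    have hcomp : (MulAut.conj b).toMonoidHom.comp (MulAut.conj (c : G)).toMonoidHom =
        (MulAut.conj (b * c)).toMonoidHom := by
      ext; simp [mul_assoc]
    rw [map_map, hcomp]
    exact map_conj_le_normalClosureIn (B.mul_mem hb c.2)
  exact this ⟨k, hk, rfl⟩

end Subgroup

namespace IsPGroup

variable {p : ℕ}

theorem iSup_of_le_normalizer {ι : Type*} {M : Subgroup G} {S : ι → Subgroup G}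
    (hS : ∀ i, IsPGroup p (S i)) (hSM : ∀ i, S i ≤ M) (hMS : ∀ i, M ≤ normalizer (S i)) :
    IsPGroup p (⨆ i, S i : Subgroup G) := by
  let Q : Sylow p M := default
  refine (Q.isPGroup'.map M.subtype).to_le (iSup_le fun i => ?_)
  have : ((S i).subgroupOf M).Normal := (normal_subgroupOf_iff_le_normalizer (hSM i)).mpr (hMS i)
  have hle : (S i).subgroupOf M ≤ Q :=
    IsPGroup.le_sylow_of_normal (N := (S i).subgroupOf M) (hS i).comap_subtype Q
  simpa [subgroupOf_map_subtype, hSM i] using map_mono (f := M.subtype) hle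

theorem normalClosureIn_of_le_normalizer {N M B : Subgroup G} (hN : IsPGroup p N) (hNM : N ≤ M)
    (hMN : M ≤ normalizer N) (hBM : B ≤ normalizer M) : IsPGroup p (normalClosureIn N B) := by
  refine iSup_of_le_normalizer (M := M) (fun b => hN.map _) (fun b => ?_) (fun b => ?_) <;>
    have hMb := mem_normalizer_iff_map_conj_eq.mp (hBM b.2)
  · exact (map_mono hNM).trans hMb.le
  · exact hMb.symm.le.trans ((map_mono hMN).trans (le_normalizer_map _))

end IsPGroup

theorem IsSubnormalIn.le {A B : Subgroup G} (h : IsSubnormalIn A B) : A ≤ B := by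
  obtain ⟨n, s, rfl, rfl, hs⟩ := h
  induction n with
  | zero => rfl
  | succ n ih => exact (ih fun i hi => hs i (by omega)).trans (hs n n.lt_succ_self).1

theorem IsSubnormalIn.of_le {A B C : Subgroup G} (h : IsSubnormalIn A B) (hAC : A ≤ C)
    (hCB : C ≤ B) : IsSubnormalIn A C := by
  obtain ⟨n, s, rfl, rfl, hs⟩ := h
  refine ⟨n, fun i => s i ⊓ C, inf_eq_left.mpr hAC, inf_eq_right.mpr hCB, fun i hi => ?_⟩
  refine ⟨inf_le_inf_right C (hs i hi).1, ?_⟩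
  rintro g ⟨hg, hgC⟩ a ⟨ha, haC⟩
  exact ⟨(hs i hi).2 g hg a ha, C.mul_mem (C.mul_mem hgC haC) (C.inv_mem hgC)⟩

theorem IsSubnormalIn.isPGroup_normalClosureIn {p : ℕ} {A B : Subgroup G} (hA : IsPGroup p A)
    (h : IsSubnormalIn A B) : IsPGroup p (normalClosureIn A B) := by
  obtain ⟨n, s, rfl, rfl, hs⟩ := h
  induction n with
  | zero => exact hA.to_le (normalClosureIn_le le_rfl le_normalizer)
  | succ n ih =>
    have hsn : IsSubnormalIn (s 0) (s n) := ⟨n, s, rfl, rfl, fun i hi => hs i (by omega)⟩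
    have hstep : s (n + 1) ≤ normalizer (s n) := le_normalizer_iff.mpr (hs n n.lt_succ_self).2
    -- the `s (n + 1)`-conjugates of the `p`-group `normalClosureIn (s 0) (s n)` are normal in `s n`
    exact (IsPGroup.normalClosureIn_of_le_normalizer (ih fun i hi => hs i (by omega))
      (normalClosureIn_le hsn.le le_normalizer) le_normalizer_normalClosureIn hstep).to_le
      (normalClosureIn_mono le_normalClosureIn)

theorem Sylow.normalizer_le_of_normalizer_le [Finite G] {p : ℕ} [Fact p.Prime] (P : Sylow p G)
    {H : Subgroup G} (hNH : normalizer (P : Subgroup G) ≤ H) : normalizer (H : Set G) ≤ H := by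
  set K := normalizer (H : Set G)
  have hPH : (P : Subgroup G) ≤ H := le_normalizer.trans hNH
  have hPK : (P : Subgroup G) ≤ K := hPH.trans le_normalizer
  have hnorm : normalizer ((P.subtype hPK : Sylow p K) : Set K) =
      (normalizer ((P : Subgroup G) : Set G)).subgroupOf K := by
    rw [← Sylow.coe_coe, Sylow.coe_subtype, subgroupOf_normalizer_eq hPK]
  have frattini := Sylow.normalizer_sup_eq_top' (P.subtype hPK) (subgroupOf_mono K hPH)
  rwa [hnorm, sup_of_le_right (subgroupOf_mono K hNH), subgroupOf_eq_top] at frattini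

section

variable [Finite G] {p : ℕ} [Fact p.Prime] (P : Sylow p G) {H : Subgroup G} {x : G}

theorem IsPGroup.le_of_mem_of_sylow_le (hPH : (P : Subgroup G) ≤ H)
    (hconj : ∀ g : G, x ∈ H.map (MulAut.conj g).toMonoidHom →
      H.map (MulAut.conj g).toMonoidHom = H)
    {N : Subgroup G} (hN : IsPGroup p N) (hxN : x ∈ N) : N ≤ H := by
  obtain ⟨R, hNR⟩ := hN.exists_le_sylow
  obtain ⟨a, rfl⟩ := MulAction.exists_smul_eq G P R
  have hRH : ((a • P : Sylow p G) : Subgroup G) ≤ H.map (MulAut.conj a).toMonoidHom := by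
    rw [Sylow.coe_subgroup_smul, pointwise_smul_def]
    exact map_mono hPH
  rw [← hconj a (hRH (hNR hxN))]
  exact hNR.trans hRH

theorem IsSubnormalIn.le_of_zpowers (hNH : normalizer (P : Subgroup G) ≤ H)
    (hconj : ∀ g : G, x ∈ H.map (MulAut.conj g).toMonoidHom →
      H.map (MulAut.conj g).toMonoidHom = H)
    (hx : IsPGroup p (zpowers x)) {K : Subgroup G} (hK : IsSubnormalIn (zpowers x) K) :
    K ≤ H := by
  have hclosure : normalClosureIn (zpowers x) K ≤ H :=
    hK.isPGroup_normalClosureIn hx |>.le_of_mem_of_sylow_le P (le_normalizer.trans hNH) hconj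
      (le_normalClosureIn (mem_zpowers x))
  refine fun c hc => Sylow.normalizer_le_of_normalizer_le P hNH ?_
  refine mem_normalizer_iff_map_conj_eq.mpr
    (hconj c ⟨c⁻¹ * x * c, hclosure ?_, by simp [mul_assoc]⟩)
  simpa using map_conj_le_normalClosureIn (K.inv_mem hc) ⟨x, mem_zpowers x, rfl⟩

end

theorem stmt_14_general [Fintype G] {p : ℕ} (hp : p.Prime)
    (P : Sylow p G) (x : G) (hx : ∃ k : ℕ, orderOf x = p ^ k)
    (H : Subgroup G) (hNH : Subgroup.normalizer ((P : Subgroup G) : Set G) ≤ H)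
    (hconj : ∀ g : G, x ∈ H.map (MulAut.conj g).toMonoidHom →
      H.map (MulAut.conj g).toMonoidHom = H) :
    subnormalizer x ≤ H ∧
      (IsSubnormalIn (Subgroup.zpowers x) H → subnormalizer x = H) := by
  have := Fact.mk hp
  obtain ⟨k, hk⟩ := hx
  have hxp : IsPGroup p (zpowers x) := .of_card (by rw [Nat.card_zpowers, hk])
  have hle : subnormalizer x ≤ H := (closure_le H).mpr fun g hg =>
    IsSubnormalIn.le_of_zpowers P hNH hconj hxp hg (subset_closure (by simp))
  refine ⟨hle, fun hxH => hle.antisymm fun h hh => subset_closure ?_⟩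
  have hxH' : x ∈ H := hxH.le (mem_zpowers x)
  exact hxH.of_le (zpowers_le.mpr (subset_closure (by simp)))
    ((closure_le H).mpr (by simp [Set.insert_subset_iff, hh, hxH']))

theorem stmt_14 [Fintype G] {p : ℕ} (hp : p.Prime)
    (P : Sylow p G) (x : G) (hxP : x ∈ P) (hx : ∃ k : ℕ, orderOf x = p ^ k)
    (H : Subgroup G) (hNH : Subgroup.normalizer ((P : Subgroup G) : Set G) ≤ H)
    (hconj : ∀ g : G, x ∈ H.map (MulAut.conj g).toMonoidHom →
      H.map (MulAut.conj g).toMonoidHom = H) :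
    subnormalizer x ≤ H ∧
      (IsSubnormalIn (Subgroup.zpowers x) H → subnormalizer x = H) :=
  stmt_14_general hp P x hx H hNH hconj
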